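/- Let T ⊆ {0,1}^n be nonempty, let ε ≥ 0 and δ ∈ [0,1], and let f : {0,1}^n → ℝ be a function that vanishes outside T and satisfies |f(x)| ≤ 1 + ε for all x ∈ T. Define the rescaled Fourier coefficients f̃(S) := f̂(S)·2^n/|T| for S ⊆ [n]. Then ∑_{S ⊆ [n]} δ^{|S|} · f̃(S)^2 ≤ (1+ε)^2 · (2^n/|T|)^{2δ}. -/

import Mathlib

noncomputable section
open Finset

/-- The character `χ_S(x) = (-1)^{∑_{i∈S} x_i}` on the Boolean cube. -/
def chi {n : ℕ} (S : Finset (Fin n)) (x : Fin n → Bool) : ℝ :=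
  ∏ i ∈ S, (if x i then (-1 : ℝ) else 1)

/-- The Fourier coefficient `f̂(S) = 2^{-n} ∑_x f(x) χ_S(x)`. -/
def fourierCoef2 {n : ℕ} (f : (Fin n → Bool) → ℝ) (S : Finset (Fin n)) : ℝ :=
  (∑ x, f x * chi S x) / 2 ^ n

def ee (a b : Bool) : ℝ := (if a then (-1:ℝ) else 1) * (if b then (-1:ℝ) else 1)
def ww (δ : ℝ) (a b : Bool) : ℝ := 1 + δ * ee a b
def Sc (δ : ℝ) {n : ℕ} (u v : (Fin n → Bool) → ℝ) : ℝ :=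
  ∑ x, ∑ y, (∏ i, ww δ (x i) (y i)) * (u x * v y)

lemma kernel_eq (δ : ℝ) {n : ℕ} (x y : Fin n → Bool) :
    (∏ i, ww δ (x i) (y i))
      = ∑ S : Finset (Fin n), δ ^ S.card * (chi S x * chi S y) := by
  have h : ∀ i : Fin n, ww δ (x i) (y i) = δ * ee (x i) (y i) + 1 := by
    intro i; simp [ww]; ring
  rw [Finset.prod_congr rfl fun i _ => h i, Finset.prod_add]
  rw [Finset.powerset_univ]
  refine Finset.sum_congr rfl fun S _ => ?_
  rw [Finset.prod_const_one, mul_one, Finset.prod_mul_distrib, Finset.prod_const]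
  unfold ee chi
  rw [Finset.prod_mul_distrib]

lemma Sc_eq (δ : ℝ) {n : ℕ} (u v : (Fin n → Bool) → ℝ) :
    Sc δ u v = ∑ S : Finset (Fin n),
      δ ^ S.card * ((∑ x, u x * chi S x) * (∑ y, v y * chi S y)) := by
  calc Sc δ u v
      = ∑ x, ∑ S : Finset (Fin n), ∑ y,
          δ ^ S.card * ((u x * chi S x) * (v y * chi S y)) := by
        unfold Sc
        refine Finset.sum_congr rfl fun x _ => ?_
        rw [Finset.sum_comm]
        refine Finset.sum_congr rfl fun y _ => ?_
        rw [kernel_eq, Finset.sum_mul]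
        exact Finset.sum_congr rfl fun S _ => by ring
    _ = ∑ S : Finset (Fin n), ∑ x, ∑ y,
          δ ^ S.card * ((u x * chi S x) * (v y * chi S y)) := Finset.sum_comm
    _ = _ := by
        refine Finset.sum_congr rfl fun S _ => ?_
        simp only [Finset.mul_sum, Finset.sum_mul]
        rw [Finset.sum_comm]

lemma kernel_nonneg {δ : ℝ} (hδ0 : 0 ≤ δ) (hδ1 : δ ≤ 1) {n : ℕ} (x y : Fin n → Bool) :
    0 ≤ ∏ i, ww δ (x i) (y i) := by
  refine Finset.prod_nonneg fun i _ => ?_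
  unfold ww ee
  rcases Bool.eq_false_or_eq_true (x i) with h1 | h1 <;>
    rcases Bool.eq_false_or_eq_true (y i) with h2 | h2 <;>
      simp [h1, h2] <;> linarith

lemma Sc_self_nonneg {δ : ℝ} (hδ0 : 0 ≤ δ) {n : ℕ} (u : (Fin n → Bool) → ℝ) :
    0 ≤ Sc δ u u := by
  rw [Sc_eq]
  refine Finset.sum_nonneg fun S _ => ?_
  exact mul_nonneg (pow_nonneg hδ0 _) (mul_self_nonneg _)

lemma Sc_cauchy {δ : ℝ} (hδ0 : 0 ≤ δ) {n : ℕ} (u v : (Fin n → Bool) → ℝ) :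
    Sc δ u v ^ 2 ≤ Sc δ u u * Sc δ v v := by
  have hs : ∀ S : Finset (Fin n), (Real.sqrt δ ^ S.card) ^ 2 = δ ^ S.card := by
    intro S; rw [← pow_mul, mul_comm, pow_mul, Real.sq_sqrt hδ0]
  have key := Finset.sum_mul_sq_le_sq_mul_sq Finset.univ
    (fun S : Finset (Fin n) => Real.sqrt δ ^ S.card * (∑ x, u x * chi S x))
    (fun S : Finset (Fin n) => Real.sqrt δ ^ S.card * (∑ y, v y * chi S y))
  calc Sc δ u v ^ 2 = (∑ S : Finset (Fin n),
        (Real.sqrt δ ^ S.card * (∑ x, u x * chi S x)) *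
        (Real.sqrt δ ^ S.card * (∑ y, v y * chi S y))) ^ 2 := by
        rw [Sc_eq]
        congr 1
        refine Finset.sum_congr rfl fun S _ => ?_
        rw [mul_mul_mul_comm, ← sq, hs S]
    _ ≤ (∑ S : Finset (Fin n), (Real.sqrt δ ^ S.card * (∑ x, u x * chi S x)) ^ 2) *
        (∑ S : Finset (Fin n), (Real.sqrt δ ^ S.card * (∑ y, v y * chi S y)) ^ 2) := key
    _ = Sc δ u u * Sc δ v v := by
        rw [Sc_eq δ u u, Sc_eq δ v v]
        congr 1 <;> refine Finset.sum_congr rfl fun S _ => ?_ <;>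
          rw [mul_pow, hs S, sq] <;> ring

lemma ww_one_diag {n : ℕ} (x y : Fin n → Bool) : (∏ i, ww 1 (x i) (y i))
    = if x = y then (2:ℝ) ^ n else 0 := by
  by_cases hxy : x = y
  · subst hxy
    simp only [if_pos rfl]
    have h : ∀ i : Fin n, ww 1 (x i) (x i) = 2 := by
      intro i; unfold ww ee
      rcases Bool.eq_false_or_eq_true (x i) with h1 | h1 <;> simp [h1] <;> norm_num
    rw [Finset.prod_congr rfl fun i _ => h i, Finset.prod_const]
    simp
  · rw [if_neg hxy]
    obtain ⟨i, hi⟩ : ∃ i, x i ≠ y i := by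
      by_contra h
      push_neg at h
      exact hxy (funext h)
    refine Finset.prod_eq_zero (Finset.mem_univ i) ?_
    unfold ww ee
    rcases Bool.eq_false_or_eq_true (x i) with h1 | h1 <;>
      rcases Bool.eq_false_or_eq_true (y i) with h2 | h2 <;>
        simp [h1, h2] at hi ⊢

lemma parseval {n : ℕ} (u : (Fin n → Bool) → ℝ) :
    ∑ S : Finset (Fin n), (∑ x, u x * chi S x) ^ 2 = 2 ^ n * ∑ x, u x ^ 2 := by
  have h1 : Sc 1 u u = ∑ S : Finset (Fin n), (∑ x, u x * chi S x) ^ 2 := by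
    rw [Sc_eq]
    exact Finset.sum_congr rfl fun S _ => by rw [one_pow, one_mul, sq]
  rw [← h1]
  unfold Sc
  calc ∑ x, ∑ y, (∏ i, ww 1 (x i) (y i)) * (u x * u y)
      = ∑ x : Fin n → Bool, (2:ℝ)^n * (u x * u x) := by
        refine Finset.sum_congr rfl fun x _ => ?_
        rw [Finset.sum_eq_single x]
        · rw [ww_one_diag x x, if_pos rfl]
        · intro y _ hyx
          rw [ww_one_diag x y, if_neg (Ne.symm hyx), zero_mul]
        · intro h; exact absurd (Finset.mem_univ x) h
    _ = 2 ^ n * ∑ x, u x ^ 2 := by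
        rw [Finset.mul_sum]
        exact Finset.sum_congr rfl fun x _ => by rw [sq]

-- (1+s)^(p-2) + (1-s)^(p-2) ≥ 2 for p ≤ 2, |s| < 1
lemma convex_aux {p s : ℝ} (hp2 : p ≤ 2) (hs0 : 0 ≤ s) (hs1 : s < 1) :
    (2:ℝ) ≤ (1+s) ^ (p-2) + (1-s) ^ (p-2) := by
  have ha : (0:ℝ) < 1 + s := by linarith
  have hb : (0:ℝ) < 1 - s := by linarith
  have hx : (0:ℝ) < (1+s) ^ (p-2) := Real.rpow_pos_of_pos ha _
  have hy : (0:ℝ) < (1-s) ^ (p-2) := Real.rpow_pos_of_pos hb _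
  have hab : (1+s) * (1-s) ≤ 1 := by nlinarith
  have habpos : (0:ℝ) < (1+s) * (1-s) := mul_pos ha hb
  have hprod : (1:ℝ) ≤ ((1+s) * (1-s)) ^ (p-2) :=
    Real.one_le_rpow_of_pos_of_le_one_of_nonpos habpos hab (by linarith)
  have hmul : (1+s) ^ (p-2) * (1-s) ^ (p-2) = ((1+s)*(1-s)) ^ (p-2) :=
    (Real.mul_rpow ha.le hb.le).symm
  nlinarith [sq_nonneg ((1+s)^(p-2) - (1-s)^(p-2)), hprod, hmul]

lemma taylor_two {p : ℝ} (hp1 : 1 ≤ p) (hp2 : p ≤ 2) {t : ℝ} (ht0 : 0 ≤ t) (ht1 : t < 1) :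
    2 + p*(p-1)*t^2 ≤ (1+t) ^ p + (1-t) ^ p := by
  set F : ℝ → ℝ := fun s => (1+s) ^ p + (1-s) ^ p - 2 - p*(p-1)*s^2 with hF
  set G : ℝ → ℝ := fun s => p*(1+s) ^ (p-1) - p*(1-s) ^ (p-1) - 2*p*(p-1)*s with hG
  have hderivF : ∀ s ∈ Set.Icc (0:ℝ) t, HasDerivAt F (G s) s := by
    intro s hs
    have ha : (0:ℝ) < 1 + s := by have := hs.1; linarith
    have hb : (0:ℝ) < 1 - s := by have := hs.2; linarith
    have h1 : HasDerivAt (fun x : ℝ => (1+x) ^ p) (p * (1+s) ^ (p-1) * 1) s :=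
      (Real.hasDerivAt_rpow_const (Or.inl ha.ne')).comp s ((hasDerivAt_id s).const_add 1)
    have h2 : HasDerivAt (fun x : ℝ => (1-x) ^ p) (p * (1-s) ^ (p-1) * (0-1)) s :=
      (Real.hasDerivAt_rpow_const (Or.inl hb.ne')).comp s
        ((hasDerivAt_const s (1:ℝ)).sub (hasDerivAt_id s))
    have h3 : HasDerivAt (fun x : ℝ => p*(p-1)*x^2) (p*(p-1)*(2*s)) s := by
      simpa using ((hasDerivAt_pow 2 s).const_mul (p*(p-1)))
    have := ((h1.add h2).sub (hasDerivAt_const s (2:ℝ))).sub h3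
    refine this.congr_deriv ?_
    simp [hG]; ring
  have hderivG : ∀ s ∈ Set.Icc (0:ℝ) t, HasDerivAt G
      (p*(p-1)*((1+s) ^ (p-2) + (1-s) ^ (p-2) - 2)) s := by
    intro s hs
    have ha : (0:ℝ) < 1 + s := by have := hs.1; linarith
    have hb : (0:ℝ) < 1 - s := by have := hs.2; linarith
    have h1 : HasDerivAt (fun x : ℝ => (1+x) ^ (p-1)) ((p-1) * (1+s) ^ (p-1-1) * 1) s :=
      (Real.hasDerivAt_rpow_const (Or.inl ha.ne')).comp s ((hasDerivAt_id s).const_add 1)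
    have h2 : HasDerivAt (fun x : ℝ => (1-x) ^ (p-1)) ((p-1) * (1-s) ^ (p-1-1) * (0-1)) s :=
      (Real.hasDerivAt_rpow_const (Or.inl hb.ne')).comp s
        ((hasDerivAt_const s (1:ℝ)).sub (hasDerivAt_id s))
    have h3 : HasDerivAt (fun x : ℝ => 2*p*(p-1)*x) (2*p*(p-1)) s := by
      simpa using (hasDerivAt_id s).const_mul (2*p*(p-1))
    have := ((h1.const_mul p).sub (h2.const_mul p)).sub h3
    refine this.congr_deriv ?_
    have e1 : p - 1 - 1 = p - 2 := by ring
    simp [hG, e1]; ring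
  -- G is monotone on [0,t], G 0 = 0, so G ≥ 0 there
  have hGmono : MonotoneOn G (Set.Icc 0 t) := by
    apply monotoneOn_of_deriv_nonneg (convex_Icc 0 t)
    · exact fun s hs => (hderivG s hs).continuousAt.continuousWithinAt
    · intro s hs
      have hs' : s ∈ Set.Icc (0:ℝ) t := interior_subset hs
      exact (hderivG s hs').differentiableAt.differentiableWithinAt
    · intro s hs
      have hs' : s ∈ Set.Icc (0:ℝ) t := interior_subset hs
      rw [(hderivG s hs').deriv]
      have hs0 : 0 ≤ s := hs'.1
      have hs1 : s < 1 := lt_of_le_of_lt hs'.2 ht1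
      have := convex_aux hp2 hs0 hs1
      exact mul_nonneg (mul_nonneg (by linarith) (by linarith)) (by linarith)
  have hG0 : G 0 = 0 := by simp [hG]
  have hGnonneg : ∀ s ∈ Set.Icc (0:ℝ) t, 0 ≤ G s := by
    intro s hs
    have h0 : (0:ℝ) ∈ Set.Icc (0:ℝ) t := Set.left_mem_Icc.2 ht0
    have := hGmono h0 hs hs.1
    rwa [hG0] at this
  have hFmono : MonotoneOn F (Set.Icc 0 t) := by
    apply monotoneOn_of_deriv_nonneg (convex_Icc 0 t)
    · exact fun s hs => (hderivF s hs).continuousAt.continuousWithinAt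
    · intro s hs
      have hs' : s ∈ Set.Icc (0:ℝ) t := interior_subset hs
      exact (hderivF s hs').differentiableAt.differentiableWithinAt
    · intro s hs
      have hs' : s ∈ Set.Icc (0:ℝ) t := interior_subset hs
      rw [(hderivF s hs').deriv]
      exact hGnonneg s hs'
  have hF0 : F 0 = 0 := by norm_num [hF]
  have hFt : 0 ≤ F t := by
    have h0 : (0:ℝ) ∈ Set.Icc (0:ℝ) t := Set.left_mem_Icc.2 ht0
    have ht : t ∈ Set.Icc (0:ℝ) t := Set.right_mem_Icc.2 ht0
    have := hFmono h0 ht ht0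
    rwa [hF0] at this
  have : F t = (1+t) ^ p + (1-t) ^ p - 2 - p*(p-1)*t^2 := rfl
  linarith [hFt, this.symm.le]

lemma one_add_le_four_rpow {δ : ℝ} (hδ0 : 0 ≤ δ) : 1 + δ ≤ (4:ℝ) ^ δ := by
  have h4 : (4:ℝ) ^ δ = Real.exp (δ * Real.log 4) := by
    rw [Real.rpow_def_of_pos (by norm_num : (0:ℝ) < 4)]
    ring_nf
  have hlog : (1:ℝ) ≤ Real.log 4 := by
    rw [Real.le_log_iff_exp_le (by norm_num : (0:ℝ) < 4)]
    have := Real.exp_one_lt_d9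
    linarith
  have hexp : δ * Real.log 4 + 1 ≤ Real.exp (δ * Real.log 4) := Real.add_one_le_exp _
  have : 1 + δ ≤ δ * Real.log 4 + 1 := by nlinarith
  linarith [h4 ▸ hexp]

lemma core_ineq {δ t : ℝ} (hδ0 : 0 ≤ δ) (hδh : δ ≤ 1/2) (ht0 : 0 ≤ t) (ht1 : t < 1) :
    4*(1+δ*t^2) ≤ (4:ℝ) ^ δ * ((1+t) ^ ((1-δ)⁻¹) + (1-t) ^ ((1-δ)⁻¹)) ^ (2*(1-δ)) := by
  set c : ℝ := 1 - δ with hc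
  set p : ℝ := c⁻¹ with hp
  have hcpos : (0:ℝ) < c := by rw [hc]; linarith
  have hc1 : c ≤ 1 := by rw [hc]; linarith
  have hch : (1:ℝ)/2 ≤ c := by rw [hc]; linarith
  have hcp : c * p = 1 := by rw [hp]; field_simp
  have hp1 : (1:ℝ) ≤ p := (one_le_inv₀ hcpos).2 hc1
  have hp2 : p ≤ 2 := by
    rw [hp]
    rw [inv_le_comm₀ hcpos (by norm_num : (0:ℝ) < 2)]
    linarith
  have hpd : δ ≤ p - 1 := by
    have h1 : (1+δ) * c ≤ 1 := by rw [hc]; nlinarith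
    have h2 : 1 + δ ≤ p := by
      rw [hp, ← one_div, le_div_iff₀ hcpos]
      linarith
    linarith
  -- the Taylor bound
  have hM : 2 + p*(p-1)*t^2 ≤ (1+t) ^ p + (1-t) ^ p := taylor_two hp1 hp2 ht0 ht1
  have hPP : (0:ℝ) ≤ p*(p-1)*t^2 :=
    mul_nonneg (mul_nonneg (by linarith) (by linarith)) (sq_nonneg t)
  have hMpos : (0:ℝ) < 2 + p*(p-1)*t^2 := by linarith
  set a : ℝ := p*(p-1)*t^2/2 with ha
  have ha0 : 0 ≤ a := by rw [ha]; linarith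
  -- monotonicity in the base
  have h2c : (1:ℝ) ≤ 2*c := by linarith
  have step1 : (2 + p*(p-1)*t^2) ^ (2*c) ≤ ((1+t) ^ p + (1-t) ^ p) ^ (2*c) :=
    Real.rpow_le_rpow hMpos.le hM (by linarith)
  have step2 : (2:ℝ) ^ (2*c) * (1 + 2*c*a) ≤ (2 + p*(p-1)*t^2) ^ (2*c) := by
    have hfact : (2 + p*(p-1)*t^2) = 2 * (1 + a) := by rw [ha]; ring
    rw [hfact, Real.mul_rpow (by norm_num) (by linarith)]
    have hbern : 1 + (2*c)*a ≤ (1 + a) ^ (2*c) :=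
      one_add_mul_self_le_rpow_one_add (by linarith) h2c
    have h2pow : (0:ℝ) < (2:ℝ) ^ (2*c) := Real.rpow_pos_of_pos (by norm_num) _
    exact mul_le_mul_of_nonneg_left hbern h2pow.le
  have hfour : (4:ℝ) ^ δ * (2:ℝ) ^ (2*c) = 4 := by
    have h42 : (4:ℝ) ^ δ = (2:ℝ) ^ (2*δ) := by
      rw [show (4:ℝ) = (2:ℝ)^(2:ℕ) by norm_num, ← Real.rpow_natCast (2:ℝ) 2,
          ← Real.rpow_mul (by norm_num : (0:ℝ) ≤ 2)]
      norm_num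
    rw [h42, ← Real.rpow_add (by norm_num : (0:ℝ) < 2), show 2*δ + 2*c = 2 by rw [hc]; ring,
        show (2:ℝ) = ((2:ℕ):ℝ) by norm_num, Real.rpow_natCast]
    norm_num
  have hfin : 4*(1+δ*t^2) ≤ 4 * (1 + 2*c*a) := by
    have : 2*c*a = (p-1)*t^2 := by
      rw [ha]
      have : 2*c*(p*(p-1)*t^2/2) = (c*p)*((p-1)*t^2) := by ring
      rw [this, hcp, one_mul]
    rw [this]
    nlinarith [sq_nonneg t]
  have h4pow : (0:ℝ) < (4:ℝ) ^ δ := Real.rpow_pos_of_pos (by norm_num) _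
  calc 4*(1+δ*t^2) ≤ 4 * (1 + 2*c*a) := hfin
    _ = (4:ℝ) ^ δ * ((2:ℝ) ^ (2*c) * (1 + 2*c*a)) := by rw [← mul_assoc, hfour]
    _ ≤ (4:ℝ) ^ δ * ((2 + p*(p-1)*t^2) ^ (2*c)) := by
        exact mul_le_mul_of_nonneg_left step2 h4pow.le
    _ ≤ _ := mul_le_mul_of_nonneg_left step1 h4pow.le

lemma two_point_aux {δ : ℝ} (hδ0 : 0 ≤ δ) (hδh : δ ≤ 1/2) {u v : ℝ} (hv : 0 ≤ v) (hvu : v ≤ u) :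
    (1+δ)*(u^2+v^2) + (1-δ)*(2*u*v)
      ≤ (4:ℝ) ^ δ * (u ^ ((1-δ)⁻¹) + v ^ ((1-δ)⁻¹)) ^ (2*(1-δ)) := by
  have hu : 0 ≤ u := le_trans hv hvu
  set c : ℝ := 1 - δ with hc
  set p : ℝ := c⁻¹ with hp
  have hcpos : (0:ℝ) < c := by rw [hc]; linarith
  have hppos : (0:ℝ) < p := by rw [hp]; positivity
  have hcp : c * p = 1 := by rw [hp]; field_simp
  have hp2c : p * (2*c) = 2 := by
    have : p * (2*c) = 2*(c*p) := by ring
    rw [this, hcp]; norm_num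
  have h2cpos : (0:ℝ) < 2*c := by linarith
  rcases eq_or_lt_of_le hv with hv0 | hvpos
  · -- v = 0
    rw [← hv0]
    have hz : (0:ℝ) ^ p = 0 := Real.zero_rpow (ne_of_gt hppos)
    rw [hz, add_zero]
    have hupow : (u ^ p) ^ (2*c) = u ^ 2 := by
      rw [← Real.rpow_natCast u 2, ← Real.rpow_mul hu, hp2c]
      norm_num
    rw [hupow]
    have h14 : 1 + δ ≤ (4:ℝ) ^ δ := one_add_le_four_rpow hδ0
    nlinarith [sq_nonneg u, Real.rpow_pos_of_pos (by norm_num : (0:ℝ) < 4) δ]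
  · -- 0 < v ≤ u
    have hS : (0:ℝ) < u + v := by linarith
    set t : ℝ := (u - v)/(u + v) with htdef
    set s : ℝ := (u + v)/2 with hsdef
    have hspos : (0:ℝ) < s := by rw [hsdef]; linarith
    have ht0 : 0 ≤ t := div_nonneg (by linarith) hS.le
    have ht1 : t < 1 := by
      rw [htdef, div_lt_one hS]; linarith
    have hueq : u = s*(1+t) := by
      rw [hsdef, htdef]; field_simp; ring
    have hveq : v = s*(1-t) := by
      rw [hsdef, htdef]; field_simp; ring
    have h1t : (0:ℝ) ≤ 1 + t := by linarith
    have h1t' : (0:ℝ) ≤ 1 - t := by linarith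
    have hlhs : (1+δ)*(u^2+v^2) + (1-δ)*(2*u*v) = 4*(1+δ*t^2) * s^2 := by
      rw [hueq, hveq]; ring
    have hspow : (s ^ p) ^ (2*c) = s ^ 2 := by
      rw [← Real.rpow_natCast s 2, ← Real.rpow_mul hspos.le, hp2c]
      norm_num
    have hrhs : (u ^ p + v ^ p) ^ (2*c)
        = ((1+t) ^ p + (1-t) ^ p) ^ (2*c) * s^2 := by
      rw [hueq, hveq, Real.mul_rpow hspos.le h1t, Real.mul_rpow hspos.le h1t',
        ← mul_add, Real.mul_rpow (Real.rpow_nonneg hspos.le p)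
          (by positivity : (0:ℝ) ≤ (1+t) ^ p + (1-t) ^ p), hspow]
      ring
    rw [hlhs, hrhs, ← mul_assoc]
    exact mul_le_mul_of_nonneg_right (core_ineq hδ0 hδh ht0 ht1) (sq_nonneg s)

lemma two_point {δ : ℝ} (hδ0 : 0 ≤ δ) (hδh : δ ≤ 1/2) {u v : ℝ} (hu : 0 ≤ u) (hv : 0 ≤ v) :
    (1+δ)*(u^2+v^2) + (1-δ)*(2*u*v)
      ≤ (4:ℝ) ^ δ * (u ^ ((1-δ)⁻¹) + v ^ ((1-δ)⁻¹)) ^ (2*(1-δ)) := by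
  rcases le_total v u with h | h
  · exact two_point_aux hδ0 hδh hv h
  · have := two_point_aux hδ0 hδh hu h
    calc (1+δ)*(u^2+v^2) + (1-δ)*(2*u*v)
        = (1+δ)*(v^2+u^2) + (1-δ)*(2*v*u) := by ring
      _ ≤ (4:ℝ) ^ δ * (v ^ ((1-δ)⁻¹) + u ^ ((1-δ)⁻¹)) ^ (2*(1-δ)) := this
      _ = _ := by rw [add_comm (v ^ ((1-δ)⁻¹))]

lemma cube_split {n : ℕ} (F : (Fin (n+1) → Bool) → ℝ) :
    ∑ x, F x = ∑ a : Bool, ∑ x' : Fin n → Bool, F (Fin.cons a x') := by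
  rw [← (Fin.consEquiv (fun _ => Bool)).sum_comp F, Fintype.sum_prod_type]
  rfl


lemma Sc_split {n : ℕ} (δ : ℝ) (u v : (Fin (n+1) → Bool) → ℝ) :
    Sc δ u v = ∑ a : Bool, ∑ b : Bool, ww δ a b *
      Sc δ (fun x' => u (Fin.cons a x')) (fun y' => v (Fin.cons b y')) := by
  unfold Sc
  rw [cube_split]
  refine Finset.sum_congr rfl fun a _ => ?_
  have inner : ∀ x : Fin (n+1) → Bool,
      (∑ y, (∏ i, ww δ (x i) (y i)) * (u x * v y))
      = ∑ b : Bool, ∑ y' : Fin n → Bool,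
          (∏ i, ww δ (x i) ((Fin.cons b y' : Fin (n+1) → Bool) i)) * (u x * v (Fin.cons b y')) := by
    intro x
    exact cube_split _
  calc ∑ x' : Fin n → Bool, ∑ y, (∏ i, ww δ ((Fin.cons a x' : Fin (n+1) → Bool) i) (y i)) *
          (u (Fin.cons a x') * v y)
      = ∑ x' : Fin n → Bool, ∑ b : Bool, ∑ y' : Fin n → Bool,
          (∏ i, ww δ ((Fin.cons a x' : Fin (n+1) → Bool) i) ((Fin.cons b y' : Fin (n+1) → Bool) i)) *
          (u (Fin.cons a x') * v (Fin.cons b y')) :=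
        Finset.sum_congr rfl fun x' _ => inner _
    _ = ∑ b : Bool, ∑ x' : Fin n → Bool, ∑ y' : Fin n → Bool,
          (ww δ a b * ∏ i : Fin n, ww δ (x' i) (y' i)) *
          (u (Fin.cons a x') * v (Fin.cons b y')) := by
        rw [Finset.sum_comm]
        refine Finset.sum_congr rfl fun b _ => Finset.sum_congr rfl fun x' _ =>
          Finset.sum_congr rfl fun y' _ => ?_
        congr 1
        rw [Fin.prod_univ_succ]
        simp [Fin.cons_zero, Fin.cons_succ]
    _ = _ := by
        refine Finset.sum_congr rfl fun b _ => ?_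
        rw [Finset.mul_sum]
        refine Finset.sum_congr rfl fun x' _ => ?_
        rw [Finset.mul_sum]
        exact Finset.sum_congr rfl fun y' _ => by ring

lemma ww_diag (δ : ℝ) (a : Bool) : ww δ a a = 1 + δ := by
  cases a <;> simp [ww, ee]

lemma ww_off (δ : ℝ) : ww δ true false = 1 - δ ∧ ww δ false true = 1 - δ := by
  constructor <;> simp [ww, ee] <;> ring


lemma keylemma {δ : ℝ} (hδ0 : 0 ≤ δ) (hδh : δ ≤ 1/2) :
    ∀ (n : ℕ) (g : (Fin n → Bool) → ℝ), (∀ x, 0 ≤ g x) →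
    Sc δ g g ≤ ((4:ℝ) ^ δ) ^ n * (∑ x, g x ^ ((1-δ)⁻¹)) ^ (2*(1-δ)) := by
  set c : ℝ := 1 - δ with hc
  set p : ℝ := c⁻¹ with hp
  have hcpos : (0:ℝ) < c := by rw [hc]; linarith
  have hppos : (0:ℝ) < p := by rw [hp]; positivity
  have hcp : c * p = 1 := by rw [hp]; field_simp
  have hp2c : p * (2*c) = 2 := by
    have h : p * (2*c) = 2*(c*p) := by ring
    rw [h, hcp]; norm_num
  have h2c0 : (0:ℝ) ≤ 2*c := by linarith
  intro n
  induction n with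
  | zero =>
    intro g hg
    have hval : Sc δ g g = g default * g default := by
      unfold Sc
      rw [Fintype.sum_unique, Fintype.sum_unique]
      simp
      congr 1 <;> exact congrArg g (Subsingleton.elim _ _)
    have hsum : (∑ x : Fin 0 → Bool, g x ^ p) = g default ^ p := by
      rw [Fintype.sum_unique]
      exact congrArg (fun z => g z ^ p) (Subsingleton.elim _ _)
    rw [hval, hsum, pow_zero, one_mul]
    have heq : (g default ^ p) ^ (2*c) = g default * g default := by
      rw [← Real.rpow_mul (hg _), hp2c,
        show (2:ℝ) = ((2:ℕ):ℝ) by norm_num, Real.rpow_natCast]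
      ring
    rw [heq]
  | succ n ih =>
    intro g hg
    set gt : (Fin n → Bool) → ℝ := fun x' => g (Fin.cons true x') with hgt
    set gf : (Fin n → Bool) → ℝ := fun x' => g (Fin.cons false x') with hgf
    have hgt0 : ∀ x, 0 ≤ gt x := fun x => hg _
    have hgf0 : ∀ x, 0 ≤ gf x := fun x => hg _
    set A : ℝ := Sc δ gt gt with hA
    set B : ℝ := Sc δ gf gf with hB
    have hA0 : 0 ≤ A := Sc_self_nonneg hδ0 gt
    have hB0 : 0 ≤ B := Sc_self_nonneg hδ0 gf
    set σt : ℝ := ∑ x', gt x' ^ p with hσt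
    set σf : ℝ := ∑ x', gf x' ^ p with hσf
    have hσt0 : 0 ≤ σt := Finset.sum_nonneg fun x _ => Real.rpow_nonneg (hgt0 x) p
    have hσf0 : 0 ≤ σf := Finset.sum_nonneg fun x _ => Real.rpow_nonneg (hgf0 x) p
    set u : ℝ := σt ^ c with hu
    set v : ℝ := σf ^ c with hv
    have hu0 : 0 ≤ u := Real.rpow_nonneg hσt0 c
    have hv0 : 0 ≤ v := Real.rpow_nonneg hσf0 c
    set Kn : ℝ := ((4:ℝ) ^ δ) ^ n with hKn
    have hKn0 : (0:ℝ) ≤ Kn :=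
      pow_nonneg (Real.rpow_nonneg (by norm_num) δ) n
    have hu2 : u ^ 2 = σt ^ (2*c) := by
      rw [hu, ← Real.rpow_natCast (σt ^ c) 2, ← Real.rpow_mul hσt0]
      norm_num
      rw [mul_comm]
    have hv2 : v ^ 2 = σf ^ (2*c) := by
      rw [hv, ← Real.rpow_natCast (σf ^ c) 2, ← Real.rpow_mul hσf0]
      norm_num
      rw [mul_comm]
    have hAu : A ≤ Kn * u ^ 2 := by rw [hu2]; exact ih gt hgt0
    have hBv : B ≤ Kn * v ^ 2 := by rw [hv2]; exact ih gf hgf0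
    have hcross : ∀ (w1 w2 : (Fin n → Bool) → ℝ) (r1 r2 : ℝ), 0 ≤ r1 → 0 ≤ r2 →
        Sc δ w1 w1 ≤ Kn * r1^2 → Sc δ w2 w2 ≤ Kn * r2^2 →
        Sc δ w1 w2 ≤ Kn * (r1 * r2) := by
      intro w1 w2 r1 r2 hr1 hr2 h1 h2
      have hsq := Sc_cauchy hδ0 w1 w2
      have h10 : 0 ≤ Sc δ w1 w1 := Sc_self_nonneg hδ0 w1
      have h20 : 0 ≤ Sc δ w2 w2 := Sc_self_nonneg hδ0 w2
      have hR0 : 0 ≤ Kn * (r1 * r2) := mul_nonneg hKn0 (mul_nonneg hr1 hr2)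
      nlinarith [hsq, h1, h2, hR0, sq_nonneg (Sc δ w1 w2 - Kn * (r1*r2)),
        sq_nonneg (Sc δ w1 w2 + Kn * (r1*r2))]
    have hCtf : Sc δ gt gf ≤ Kn * (u * v) := hcross gt gf u v hu0 hv0 hAu hBv
    have hCft : Sc δ gf gt ≤ Kn * (v * u) := hcross gf gt v u hv0 hu0 hBv hAu
    have hsplit : Sc δ g g = (1+δ)*A + (1-δ)*(Sc δ gt gf)
        + ((1-δ)*(Sc δ gf gt) + (1+δ)*B) := by
      rw [Sc_split]
      simp only [Fintype.sum_bool]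
      rw [ww_diag, ww_diag, (ww_off δ).1, (ww_off δ).2]
      try simp only [← hgt, ← hgf, ← hA, ← hB]
      try ring
    have hδ1 : δ ≤ 1 := by linarith
    have hstep1 : Sc δ g g ≤ Kn * ((1+δ)*(u^2+v^2) + (1-δ)*(2*u*v)) := by
      have e1 := mul_le_mul_of_nonneg_left hAu (show (0:ℝ) ≤ 1+δ by linarith)
      have e2 := mul_le_mul_of_nonneg_left hBv (show (0:ℝ) ≤ 1+δ by linarith)
      have e3 := mul_le_mul_of_nonneg_left hCtf (show (0:ℝ) ≤ 1-δ by linarith)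
      have e4 := mul_le_mul_of_nonneg_left hCft (show (0:ℝ) ≤ 1-δ by linarith)
      linarith [hsplit, e1, e2, e3, e4]
    have htp := two_point hδ0 hδh hu0 hv0
    have hup : u ^ ((1-δ)⁻¹) = σt := by
      rw [hu, ← hc, ← hp, ← Real.rpow_mul hσt0, hcp, Real.rpow_one]
    have hvp : v ^ ((1-δ)⁻¹) = σf := by
      rw [hv, ← hc, ← hp, ← Real.rpow_mul hσf0, hcp, Real.rpow_one]
    have hsum : (∑ x : Fin (n+1) → Bool, g x ^ p) = σt + σf := by
      rw [cube_split (fun x => g x ^ p)]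
      simp only [Fintype.sum_bool]
      try rfl
    calc Sc δ g g ≤ Kn * ((1+δ)*(u^2+v^2) + (1-δ)*(2*u*v)) := hstep1
      _ ≤ Kn * ((4:ℝ)^δ * ((u ^ ((1-δ)⁻¹) + v ^ ((1-δ)⁻¹)) ^ (2*(1-δ)))) :=
          mul_le_mul_of_nonneg_left htp hKn0
      _ = ((4:ℝ)^δ)^(n+1) * (∑ x : Fin (n+1) → Bool, g x ^ p) ^ (2*c) := by
          rw [hup, hvp, hsum, ← hc, hKn, pow_succ]
          ring

/-- Corollary of hypercontractivity (KKL-type): if `f` vanishes outside a nonempty set `T`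
and `|f| ≤ 1 + ε` on `T`, then for `f̃(S) := f̂(S)·2ⁿ/|T|`,
`∑_S δ^{|S|} f̃(S)² ≤ (1+ε)² (2ⁿ/|T|)^{2δ}`. -/
theorem stmt6 (n : ℕ) (T : Finset (Fin n → Bool)) (hT : T.Nonempty)
    (ε δ : ℝ) (hε : 0 ≤ ε) (hδ0 : 0 ≤ δ) (hδ1 : δ ≤ 1)
    (f : (Fin n → Bool) → ℝ)
    (hvanish : ∀ x ∉ T, f x = 0)
    (hbound : ∀ x ∈ T, |f x| ≤ 1 + ε) :
    ∑ S : Finset (Fin n), δ ^ S.card * (fourierCoef2 f S * 2 ^ n / T.card) ^ 2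
      ≤ (1 + ε) ^ 2 * ((2 : ℝ) ^ n / (T.card : ℝ)) ^ (2 * δ) := by
  set M : ℝ := 1 + ε with hM
  have hM1 : (1:ℝ) ≤ M := by rw [hM]; linarith
  have hM0 : (0:ℝ) < M := lt_of_lt_of_le one_pos hM1
  set τ : ℝ := (T.card : ℝ) with hτdef
  have hτ : (0:ℝ) < τ := by
    rw [hτdef]
    exact_mod_cast Finset.card_pos.2 hT
  set N : ℝ := (2:ℝ) ^ n with hNdef
  have hN : (0:ℝ) < N := by rw [hNdef]; positivity
  have hτN : τ ≤ N := by
    rw [hτdef, hNdef]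
    have h1 : T.card ≤ Fintype.card (Fin n → Bool) := Finset.card_le_univ T
    have h2 : Fintype.card (Fin n → Bool) = 2 ^ n := by
      simp [Fintype.card_fun]
    rw [h2] at h1
    exact_mod_cast h1
  -- rewrite LHS as Sc δ f f / τ^2
  have hLHS : ∑ S : Finset (Fin n), δ ^ S.card * (fourierCoef2 f S * 2 ^ n / T.card) ^ 2
      = Sc δ f f / τ ^ 2 := by
    rw [Sc_eq δ f f, Finset.sum_div]
    refine Finset.sum_congr rfl fun S _ => ?_
    unfold fourierCoef2
    rw [div_mul_cancel₀ _ (by positivity : ((2:ℝ)^n) ≠ 0)]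
    rw [div_pow, ← hτdef, sq (∑ x, f x * chi S x)]
    ring
  rw [hLHS, div_le_iff₀ (by positivity : (0:ℝ) < τ ^ 2)]
  -- reduce to : Sc δ f f ≤ M^2 * (N/τ)^(2δ) * τ^2
  -- bound on ∑ f^2 over T
  have hsq : ∀ x, f x ^ 2 ≤ M ^ 2 := by
    intro x
    by_cases hx : x ∈ T
    · have := hbound x hx
      rw [hM]
      nlinarith [abs_nonneg (f x), sq_abs (f x)]
    · rw [hvanish x hx]
      nlinarith
  rcases le_or_gt δ (1/2) with hδh | hδh
  · -- hard case via hypercontractivity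
    set c : ℝ := 1 - δ with hc
    set p : ℝ := c⁻¹ with hp
    have hcpos : (0:ℝ) < c := by rw [hc]; linarith
    have hppos : (0:ℝ) < p := by rw [hp]; positivity
    have hcp : c * p = 1 := by rw [hp]; field_simp
    set g : (Fin n → Bool) → ℝ := fun x => |f x| with hg
    have hg0 : ∀ x, 0 ≤ g x := fun x => abs_nonneg _
    have h1 : Sc δ f f ≤ Sc δ g g := by
      unfold Sc
      refine Finset.sum_le_sum fun x _ => Finset.sum_le_sum fun y _ => ?_
      have hK := kernel_nonneg hδ0 hδ1 x y
      refine mul_le_mul_of_nonneg_left ?_ hK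
      calc f x * f y ≤ |f x * f y| := le_abs_self _
        _ = g x * g y := by rw [hg]; exact abs_mul _ _
    have h2 := keylemma hδ0 hδh n g hg0
    have h3 : (∑ x, g x ^ p) ≤ τ * M ^ p := by
      have hT' : ∑ x, g x ^ p = ∑ x ∈ T, g x ^ p := by
        symm
        apply Finset.sum_subset (Finset.subset_univ T)
        intro x _ hx
        rw [hg]
        simp only
        rw [hvanish x hx, abs_zero, Real.zero_rpow (ne_of_gt hppos)]
      rw [hT']
      have hb : ∀ x ∈ T, g x ^ p ≤ M ^ p := by
        intro x hx
        exact Real.rpow_le_rpow (hg0 x) (hbound x hx) hppos.le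
      calc ∑ x ∈ T, g x ^ p ≤ ∑ _x ∈ T, M ^ p := Finset.sum_le_sum hb
        _ = τ * M ^ p := by rw [Finset.sum_const, nsmul_eq_mul, hτdef]
    have hgp0 : (0:ℝ) ≤ ∑ x, g x ^ p :=
      Finset.sum_nonneg fun x _ => Real.rpow_nonneg (hg0 x) p
    have h4 : (∑ x, g x ^ p) ^ (2*c) ≤ (τ * M ^ p) ^ (2*c) :=
      Real.rpow_le_rpow hgp0 h3 (by linarith)
    have h5 : (τ * M ^ p) ^ (2*c) = τ ^ (2*c) * M ^ 2 := by
      rw [Real.mul_rpow hτ.le (Real.rpow_nonneg hM0.le p), ← Real.rpow_mul hM0.le]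
      have : p * (2*c) = 2 := by
        have h : p * (2*c) = 2*(c*p) := by ring
        rw [h, hcp]; norm_num
      rw [this, show (2:ℝ) = ((2:ℕ):ℝ) by norm_num, Real.rpow_natCast]
    have h6 : ((4:ℝ) ^ δ) ^ n = N ^ (2*δ) := by
      rw [hNdef, ← Real.rpow_natCast ((4:ℝ) ^ δ) n, ← Real.rpow_natCast (2:ℝ) n,
        ← Real.rpow_mul (by norm_num : (0:ℝ) ≤ 4),
        ← Real.rpow_mul (by norm_num : (0:ℝ) ≤ 2),
        show (4:ℝ) = (2:ℝ)^(2:ℕ) by norm_num, ← Real.rpow_natCast (2:ℝ) 2,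
        ← Real.rpow_mul (by norm_num : (0:ℝ) ≤ 2)]
      norm_num
      ring_nf
    have h7 : M ^ 2 * (N/τ) ^ (2*δ) * τ ^ 2 = N ^ (2*δ) * (τ ^ (2*c) * M ^ 2) := by
      rw [Real.div_rpow hN.le hτ.le]
      have hτ2 : τ ^ (2*c) = τ ^ (2:ℕ) / τ ^ (2*δ) := by
        rw [← Real.rpow_natCast τ 2, ← Real.rpow_sub hτ]
        congr 1
        rw [hc]
        push_cast
        ring
      rw [hτ2]
      field_simp
    calc Sc δ f f ≤ Sc δ g g := h1
      _ ≤ ((4:ℝ) ^ δ) ^ n * (∑ x, g x ^ p) ^ (2*c) := h2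
      _ ≤ ((4:ℝ) ^ δ) ^ n * (τ ^ (2*c) * M ^ 2) := by
          rw [← h5]
          exact mul_le_mul_of_nonneg_left h4 (by positivity)
      _ = M ^ 2 * (N/τ) ^ (2*δ) * τ ^ 2 := by rw [h6, h7]
  · -- easy case via Parseval
    have h1 : Sc δ f f ≤ Sc 1 f f := by
      rw [Sc_eq δ f f, Sc_eq 1 f f]
      refine Finset.sum_le_sum fun S _ => ?_
      rw [one_pow, one_mul, ← sq]
      have hδk : δ ^ S.card ≤ 1 := pow_le_one₀ hδ0 hδ1
      nlinarith [sq_nonneg (∑ x, f x * chi S x), hδk]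
    have h2 : Sc 1 f f = N * ∑ x, f x ^ 2 := by
      have hps := parseval f
      have h1' : Sc 1 f f = ∑ S : Finset (Fin n), (∑ x, f x * chi S x) ^ 2 := by
        rw [Sc_eq]
        exact Finset.sum_congr rfl fun S _ => by rw [one_pow, one_mul, sq]
      rw [h1', hps, hNdef]
    have h3 : ∑ x, f x ^ 2 ≤ τ * M ^ 2 := by
      have hT' : ∑ x, f x ^ 2 = ∑ x ∈ T, f x ^ 2 := by
        symm
        apply Finset.sum_subset (Finset.subset_univ T)
        intro x _ hx
        rw [hvanish x hx]
        norm_num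
      rw [hT']
      calc ∑ x ∈ T, f x ^ 2 ≤ ∑ x ∈ T, M ^ 2 :=
            Finset.sum_le_sum fun x hx => hsq x
        _ = τ * M ^ 2 := by rw [Finset.sum_const, nsmul_eq_mul, hτdef]
    have hx1 : (1:ℝ) ≤ N/τ := (one_le_div hτ).2 hτN
    have h4 : N/τ ≤ (N/τ) ^ (2*δ) := by
      calc N/τ = (N/τ) ^ (1:ℝ) := (Real.rpow_one _).symm
        _ ≤ (N/τ) ^ (2*δ) := Real.rpow_le_rpow_of_exponent_le hx1 (by linarith)
    calc Sc δ f f ≤ N * ∑ x, f x ^ 2 := by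
          rw [← h2]; exact h1
      _ ≤ N * (τ * M ^ 2) := by
          apply mul_le_mul_of_nonneg_left h3 hN.le
      _ = (N/τ) * (M ^ 2 * τ ^ 2) := by field_simp
      _ ≤ (N/τ) ^ (2*δ) * (M ^ 2 * τ ^ 2) := by
          apply mul_le_mul_of_nonneg_right h4 (by positivity)
      _ = M ^ 2 * (N/τ) ^ (2*δ) * τ ^ 2 := by ring
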